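/- arXiv:1911.06985 — 7 statements merged into one kernel-verified Lean document; each statement's English description precedes it below -/
import Mathlib

section
/- Let T be a nonempty string whose Lyndon factorization, grouped into maximal runs of equal factors, is T = T_1^{τ_1} T_2^{τ_2} ··· T_t^{τ_t} with T_1 ≻_lex T_2 ≻_lex ··· ≻_lex T_t pairwise distinct Lyndon words and each τ_x ≥ 1, and let R = T_1 T_2 ··· T_t. List all conjugates of all Lyndon factors T_1, ..., T_t of R as c_1, c_2, ..., c_{|R|} in ≺_ω-increasing order (this order is strict by the pairwise distinctness of the ω-powers of these conjugates). Then BBWT(T) equals the concatenation, for k = 1, ..., |R|, of the last character of c_k repeated τ_{x(k)} times, where x(k) is the index of the Lyndon factor of which c_k is a conjugate. -/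
open List

variable {α : Type*} [LinearOrder α]

/-- A nonempty string is a Lyndon word if it is lexicographically strictly smaller than
each of its nonempty proper suffixes. -/
def IsLyndon (w : List α) : Prop :=
  w ≠ [] ∧ ∀ s : List α, s ≠ [] → s ≠ w → s <:+ w → List.Lex (· < ·) w s

/-- Lexicographic order on infinite words `ℕ → α`. -/
def InfLexLt (u v : ℕ → α) : Prop :=
  ∃ n : ℕ, (∀ m < n, u m = v m) ∧ u n < v n

/-- The infinite periodic word `S^ω` associated with a (nonempty) string `S`. -/
def omegaWord [Inhabited α] (S : List α) : ℕ → α :=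
  fun n => S.getD (n % S.length) default

/-- `S ≺_ω T` iff `S^ω` is lexicographically smaller than `T^ω`. -/
def OmegaLt [Inhabited α] (S T : List α) : Prop :=
  InfLexLt (omegaWord S) (omegaWord T)

open Classical in
/-- The length of the longest Lyndon prefix of `T`. -/
noncomputable def lynPrefixLen (T : List α) : ℕ :=
  sSup {k | k ≤ T.length ∧ IsLyndon (T.take k)}

/-- Greedy computation of the Lyndon factorization (with fuel). -/
noncomputable def lynGo : ℕ → List α → List (List α)
  | 0, _ => []
  | n + 1, T =>
    if T = [] then []
    else T.take (max 1 (lynPrefixLen T)) :: lynGo n (T.drop (max 1 (lynPrefixLen T)))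

/-- The Lyndon factorization of `T`: repeatedly cut off the longest Lyndon prefix. -/
noncomputable def lyndonFactorization (T : List α) : List (List α) :=
  lynGo T.length T

open Classical in
/-- The bijective Burrows–Wheeler transform: last characters of all conjugates of all
Lyndon factors of `T`, listed in `≺_ω`-nondecreasing order. -/
noncomputable def BBWT [Inhabited α] (T : List α) : List α :=
  (((lyndonFactorization T).flatMap
      (fun w => (List.range w.length).map (fun i => w.drop i ++ w.take i))).mergeSort
      (fun a b => decide (¬ OmegaLt b a))).map (fun w => w.getLastD default)

/-! A Lyndon prefix of `w F₁ ⋯ F_m`, where `w` is Lyndon and every `F_j ≤ w`, cannot reach past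
`w`: a nonempty proper suffix of it would be a prefix of some `F_j`, hence `≤ w`, contradicting
minimality among its suffixes. So the greedy factorization of `T` returns the factors `T_x`, each
repeated `τ_x` times, and the BBWT sorts the conjugates of these factors by their `ω`-words.
A Lyndon word has no period shorter than its length, so two conjugates of Lyndon words with
the same `ω`-word have equal length and are equal. The sort therefore has no ties between
distinct strings, and its output is forced: the entries of `L` in order, each repeated `τ_x`
times. -/

theorem List.IsPrefix.lt_of_ne {l₁ l₂ : List α} (h : l₁ <+: l₂) (hne : l₁ ≠ l₂) : l₁ < l₂ :=
  lt_of_le_of_ne (Std.not_lt.mp h.le) hne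

theorem List.exists_isSuffix_isPrefix_of_isPrefix_flatten {β : Type*} :
    ∀ {F : List (List β)} {r : List β}, r ≠ [] → r <+: F.flatten →
      ∃ s, s ≠ [] ∧ s <:+ r ∧ ∃ f ∈ F, s <+: f
  | [], r, hr, h => absurd (List.prefix_nil.mp h) hr
  | f :: F, r, hr, h => by
    rw [flatten_cons] at h
    by_cases hrf : r <+: f
    · exact ⟨r, hr, suffix_refl r, f, mem_cons_self, hrf⟩
    obtain ⟨r', rfl⟩ :=
      (prefix_or_prefix_of_prefix h (prefix_append f F.flatten)).resolve_left hrf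
    have hr' : r' ≠ [] := by rintro rfl; exact hrf (by simp)
    obtain ⟨s, hs, hsr, g, hg, hsg⟩ :=
      exists_isSuffix_isPrefix_of_isPrefix_flatten hr' ((prefix_append_right_inj f).mp h)
    exact ⟨s, hs, hsr.trans (suffix_append f r'), g, mem_cons_of_mem f hg, hsg⟩

theorem IsLyndon.length_le_of_isLyndon_prefix {w p : List α} {F : List (List α)}
    (hw : IsLyndon w) (hF : ∀ f ∈ F, f ≤ w) (hp : IsLyndon p) (hpre : p <+: w ++ F.flatten) :
    p.length ≤ w.length := by
  by_contra! hlen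
  have hwp : w <+: p := prefix_of_prefix_length_le (prefix_append w F.flatten) hpre hlen.le
  obtain ⟨r, rfl⟩ := hwp
  have hr : r ≠ [] := by rintro rfl; simp at hlen
  obtain ⟨s, hs, hsr, f, hf, hsf⟩ :=
    exists_isSuffix_isPrefix_of_isPrefix_flatten hr ((prefix_append_right_inj w).mp hpre)
  have hsp : s ≠ w ++ r := fun h => by
    have := h ▸ hsr.length_le
    simp only [length_append, add_le_iff_nonpos_left, Nat.le_zero, length_eq_zero_iff] at this
    exact hw.1 this
  have : w ++ r < w ++ r :=
    calc w ++ r < s := hp.2 s hs hsp (hsr.trans (suffix_append w r))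
      _ ≤ f := Std.not_lt.mp hsf.le
      _ ≤ w := hF f hf
      _ ≤ w ++ r := Std.not_lt.mp (prefix_append w r).le
  exact lt_irrefl _ this

theorem lynPrefixLen_append_flatten {w : List α} {F : List (List α)} (hw : IsLyndon w)
    (hF : ∀ f ∈ F, f ≤ w) : lynPrefixLen (w ++ F.flatten) = w.length := by
  refine IsGreatest.csSup_eq ⟨⟨by simp, by rwa [take_left]⟩, ?_⟩
  rintro k ⟨hk, hlyn⟩
  have := hw.length_le_of_isLyndon_prefix hF hlyn (take_prefix k _)
  rwa [length_take, min_eq_left hk] at this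

theorem lynGo_flatten {F : List (List α)} (hF : ∀ f ∈ F, IsLyndon f) (hdec : F.Pairwise (· ≥ ·))
    {n : ℕ} (hn : F.flatten.length ≤ n) : lynGo n F.flatten = F := by
  induction n generalizing F with
  | zero =>
    rcases F with _ | ⟨w, F⟩
    · rfl
    · simp only [flatten_cons, length_append, Nat.le_zero, Nat.add_eq_zero_iff,
        length_eq_zero_iff] at hn
      exact absurd hn.1 (hF w mem_cons_self).1
  | succ n ih =>
    rcases F with _ | ⟨w, F⟩
    · simp [lynGo]
    have hw := hF w mem_cons_self
    rw [pairwise_cons] at hdec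
    have hwpos := length_pos_iff.mpr hw.1
    rw [flatten_cons, lynGo, if_neg (by simp [hw.1]), lynPrefixLen_append_flatten hw hdec.1,
      max_eq_right hwpos, take_left, drop_left,
      ih (fun f hf => hF f (mem_cons_of_mem w hf)) hdec.2
        (by simp only [flatten_cons, length_append] at hn; omega)]

theorem lyndonFactorization_flatten {F : List (List α)} (hF : ∀ f ∈ F, IsLyndon f)
    (hdec : F.Pairwise (· ≥ ·)) : lyndonFactorization F.flatten = F :=
  lynGo_flatten hF hdec le_rfl
section OmegaWord

variable {β : Type*} [Inhabited β]

theorem omegaWord_of_lt {S : List β} {n : ℕ} (hn : n < S.length) : omegaWord S n = S[n] := by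
  rw [omegaWord, Nat.mod_eq_of_lt hn, getD_eq_getElem _ _ hn]

theorem omegaWord_periodic (S : List β) : Function.Periodic (omegaWord S) S.length := by
  simp [omegaWord]

theorem omegaWord_rotate (S : List β) (i : ℕ) :
    omegaWord (S.rotate i) = fun n => omegaWord S (n + i) := by
  funext n
  rcases eq_or_ne S [] with rfl | hS
  · simp [omegaWord]
  have hpos := length_pos_iff.mpr hS
  simp only [omegaWord, length_rotate]
  rw [getD_eq_getElem _ _ (by simpa using Nat.mod_lt _ hpos),
    getD_eq_getElem _ _ (Nat.mod_lt _ hpos), getElem_rotate]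
  simp [Nat.add_mod]

theorem eq_of_omegaWord_eq {S T : List β} (hlen : S.length = T.length)
    (h : omegaWord S = omegaWord T) : S = T :=
  ext_getElem hlen fun n hS hT => by rw [← omegaWord_of_lt, ← omegaWord_of_lt, h]

end OmegaWord

namespace IsLyndon

variable [Inhabited α] {w v : List α}

theorem length_le_of_periodic (hw : IsLyndon w) {d : ℕ} (hd : 0 < d)
    (hper : Function.Periodic (omegaWord w) d) : w.length ≤ d := by
  by_contra! hdw
  have hborder : w.drop d = w.take (w.length - d) := by
    refine ext_getElem (by simp) fun n h₁ h₂ => ?_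
    simp only [length_drop] at h₁
    rw [getElem_drop, getElem_take, ← omegaWord_of_lt, ← omegaWord_of_lt, add_comm, hper]
  have hne : w.drop d ≠ w := fun h => by have := congrArg length h; simp at this; omega
  have hlt₁ : w < w.drop d := hw.2 _ (by simpa using hdw) hne (drop_suffix d w)
  have hlt₂ : w.drop d < w := hborder ▸ (take_prefix _ w).lt_of_ne (hborder ▸ hne)
  exact lt_asymm hlt₁ hlt₂

theorem length_le_of_periodic_rotate (hw : IsLyndon w) (i : ℕ) {d : ℕ} (hd : 0 < d)
    (hper : Function.Periodic (omegaWord (w.rotate i)) d) : w.length ≤ d := by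
  rw [← rotate_mod, omegaWord_rotate] at hper
  have hi : i % w.length ≤ w.length := (Nat.mod_lt _ (length_pos_iff.mpr hw.1)).le
  refine hw.length_le_of_periodic hd fun n => ?_
  have hback : ∀ m, omegaWord w m = omegaWord w (m + (w.length - i % w.length) + i % w.length) :=
    fun m => by rw [Nat.add_assoc, Nat.sub_add_cancel hi, omegaWord_periodic]
  rw [hback, hback n, add_right_comm n d]
  exact hper _

theorem rotate_eq_of_omegaWord_eq (hw : IsLyndon w) (hv : IsLyndon v) {i j : ℕ}
    (h : omegaWord (w.rotate i) = omegaWord (v.rotate j)) : w.rotate i = v.rotate j := by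
  have hpw := omegaWord_periodic (w.rotate i)
  have hpv := omegaWord_periodic (v.rotate j)
  rw [length_rotate] at hpw hpv
  refine eq_of_omegaWord_eq ?_ h
  rw [length_rotate, length_rotate]
  exact le_antisymm (hw.length_le_of_periodic_rotate i (length_pos_iff.mpr hv.1) (h ▸ hpv))
    (hv.length_le_of_periodic_rotate j (length_pos_iff.mpr hw.1) (h ▸ hpw))

end IsLyndon

theorem List.flatten_replicate_perm_flatMap {β : Type*} (k : ℕ) (l : List β) :
    (replicate k l).flatten ~ l.flatMap (replicate k) := by
  classical
  rw [perm_iff_count]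
  intro a
  simp only [count_flatten, count_flatMap, map_replicate, sum_replicate, smul_eq_mul]
  induction l with
  | nil => simp
  | cons b l ih => simp [count_cons, count_replicate, mul_add, ih, add_comm]

theorem List.mergeSort_eq_of_perm_of_pairwise {β γ : Type*} [LinearOrder γ] (f : β → γ)
    {l M : List β} (hperm : l ~ M) (hM : M.Pairwise fun a b => f a ≤ f b)
    (hinj : ∀ a ∈ l, ∀ b ∈ l, f a = f b → a = b) :
    l.mergeSort (fun a b => decide (f a ≤ f b)) = M := by
  have hsort := mergeSort_perm l fun a b => decide (f a ≤ f b)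
  refine Perm.eq_of_pairwise (le := fun a b => decide (f a ≤ f b) = true)
    (fun a b ha hb hab hba => hinj a (hsort.subset ha) b (hperm.symm.subset hb)
      (le_antisymm (of_decide_eq_true hab) (of_decide_eq_true hba)))
    (pairwise_mergeSort (fun a b c hab hbc => decide_eq_true
      ((of_decide_eq_true hab).trans (of_decide_eq_true hbc)))
      (fun a b => by simpa using le_total (f a) (f b)) l)
    (hM.imp decide_eq_true) (hsort.trans hperm)

theorem List.pairwise_flatMap_replicate_of_isChain {β δ γ : Type*} [Preorder γ] (f : β → δ)
    (g : δ → γ) (k : β → ℕ) {L : List β}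
    (h : L.IsChain fun a b => g (f a) < g (f b)) :
    (L.flatMap fun a => replicate (k a) (f a)).Pairwise fun x y => g x ≤ g y := by
  have hpw : L.Pairwise fun a b => g (f a) < g (f b) :=
    pairwise_map.mp ((isChain_map (g ∘ f)).mpr h).pairwise
  rw [pairwise_flatMap]
  refine ⟨fun a _ => pairwise_replicate.mpr (Or.inr le_rfl), hpw.imp fun hab x hx y hy => ?_⟩
  rw [eq_of_mem_replicate hx, eq_of_mem_replicate hy]
  exact hab.le

def conjugates {β : Type*} (w : List β) : List (List β) :=
  (range w.length).map fun i => w.drop i ++ w.take i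

theorem exists_rotate_eq_of_mem_flatMap_conjugates {β : Type*} {F : List (List β)} {c : List β}
    (h : c ∈ F.flatMap conjugates) : ∃ f ∈ F, ∃ i, f.rotate i = c := by
  obtain ⟨f, hf, hc⟩ := mem_flatMap.mp h
  obtain ⟨i, hi, rfl⟩ := mem_map.mp hc
  exact ⟨f, hf, i, rotate_eq_drop_append_take (mem_range.mp hi).le⟩

theorem flatMap_conjugates_perm {β : Type*} {t : ℕ} (Ts : Fin t → List β) (τ : Fin t → ℕ)
    {L : List (Fin t × List β)}
    (hperm : L.Perm ((List.ofFn (fun x => (List.range (Ts x).length).map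
        (fun i => (x, (Ts x).drop i ++ (Ts x).take i)))).flatten)) :
    (ofFn fun x => replicate (τ x) (Ts x)).flatten.flatMap conjugates ~
      L.flatMap fun p => replicate (τ p.1) p.2 :=
  calc (ofFn fun x => replicate (τ x) (Ts x)).flatten.flatMap conjugates
      = (finRange t).flatMap fun x => (replicate (τ x) (conjugates (Ts x))).flatten := by
        simp [ofFn_eq_map, ← flatMap_def, flatMap_assoc, flatMap_replicate]
    _ ~ (finRange t).flatMap fun x => (conjugates (Ts x)).flatMap (replicate (τ x)) :=
        Perm.flatMap_left _ fun x _ => flatten_replicate_perm_flatMap _ _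
    _ = (ofFn (fun x => (range (Ts x).length).map
          (fun i => (x, (Ts x).drop i ++ (Ts x).take i)))).flatten.flatMap
            fun p => replicate (τ p.1) p.2 := by
        simp [ofFn_eq_map, ← flatMap_def, flatMap_assoc, conjugates, flatMap_map]
    _ ~ L.flatMap fun p => replicate (τ p.1) p.2 := (hperm.flatMap_right _).symm

theorem forall_mem_flatten_ofFn_replicate {β : Type*} {t : ℕ} {Ts : Fin t → List β}
    (τ : Fin t → ℕ) {P : List β → Prop} (h : ∀ x, P (Ts x)) :
    ∀ f ∈ (ofFn fun x => replicate (τ x) (Ts x)).flatten, P f := fun f hf => by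
  obtain ⟨_, hl, hf⟩ := mem_flatten.mp hf
  obtain ⟨x, rfl⟩ := mem_ofFn.mp hl
  exact eq_of_mem_replicate hf ▸ h x

theorem lyndonFactorization_flatten_ofFn_replicate {t : ℕ} {Ts : Fin t → List α}
    (τ : Fin t → ℕ) (hLyn : ∀ x, IsLyndon (Ts x)) (hdec : ∀ x y : Fin t, x < y → Ts y < Ts x) :
    lyndonFactorization (ofFn fun x => (replicate (τ x) (Ts x)).flatten).flatten =
      (ofFn fun x => replicate (τ x) (Ts x)).flatten := by
  rw [← Function.comp_def flatten, ← map_ofFn, ← flatten_flatten]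
  refine lyndonFactorization_flatten (forall_mem_flatten_ofFn_replicate τ hLyn) ?_
  refine pairwise_flatten.mpr ⟨fun l hl => ?_, pairwise_ofFn.mpr fun x y hxy f hf g hg => ?_⟩
  · obtain ⟨x, rfl⟩ := mem_ofFn.mp hl
    exact pairwise_replicate.mpr (Or.inr le_rfl)
  · rw [eq_of_mem_replicate hf, eq_of_mem_replicate hg]
    exact (hdec x y hxy).le

theorem BBWT_eq_map_mergeSort [Inhabited α] (T : List α) :
    BBWT T = (((lyndonFactorization T).flatMap conjugates).mergeSort
      fun a b => decide (toLex (omegaWord a) ≤ toLex (omegaWord b))).map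
        (·.getLastD default) := by
  unfold BBWT conjugates
  congr
  funext a b
  exact decide_eq_decide.mpr (not_lt : ¬toLex (omegaWord b) < toLex (omegaWord a) ↔ _)

theorem eq_of_omegaWord_eq_of_mem_flatMap_conjugates [Inhabited α] {F : List (List α)}
    (hF : ∀ f ∈ F, IsLyndon f) {a b : List α} (ha : a ∈ F.flatMap conjugates)
    (hb : b ∈ F.flatMap conjugates) (h : omegaWord a = omegaWord b) : a = b := by
  obtain ⟨f, hf, i, rfl⟩ := exists_rotate_eq_of_mem_flatMap_conjugates ha
  obtain ⟨g, hg, j, rfl⟩ := exists_rotate_eq_of_mem_flatMap_conjugates hb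
  exact (hF f hf).rotate_eq_of_omegaWord_eq (hF g hg) h

theorem bbwt_eq_of_sorted_conjugates_general [Inhabited α]
    (t : ℕ) (Ts : Fin t → List α) (τ : Fin t → ℕ)
    (hLyn : ∀ x, IsLyndon (Ts x))
    (hdec : ∀ x y : Fin t, x < y → List.Lex (· < ·) (Ts y) (Ts x))
    (T : List α)
    (hT : T = (List.ofFn (fun x => (List.replicate (τ x) (Ts x)).flatten)).flatten)
    (L : List (Fin t × List α))
    (hperm : L.Perm ((List.ofFn (fun x => (List.range (Ts x).length).map
        (fun i => (x, (Ts x).drop i ++ (Ts x).take i)))).flatten))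
    (hsorted : L.Chain' (fun a b => OmegaLt a.2 b.2)) :
    BBWT T = L.flatMap (fun p => List.replicate (τ p.1) (p.2.getLastD default)) := by
  have hF := lyndonFactorization_flatten_ofFn_replicate τ hLyn hdec
  rw [BBWT_eq_map_mergeSort, hT, hF, mergeSort_eq_of_perm_of_pairwise _
    (flatMap_conjugates_perm Ts τ hperm)
    (pairwise_flatMap_replicate_of_isChain Prod.snd (fun S => toLex (omegaWord S)) _ hsorted)
    fun a ha b hb hab => eq_of_omegaWord_eq_of_mem_flatMap_conjugates
      (forall_mem_flatten_ofFn_replicate τ hLyn) ha hb (toLex.injective hab)]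
  simp [map_flatMap, map_replicate]

/-- Let `T = T₁^{τ₁} ⋯ T_t^{τ_t}` be the composed Lyndon factorization of `T`, with
`T₁ ≻ ⋯ ≻ T_t` pairwise distinct Lyndon words and `τ_x ≥ 1`, and `R = T₁ ⋯ T_t`.
If `L` lists all conjugates of all Lyndon factors `T₁, …, T_t` (tagged with the index of
their factor), sorted strictly increasingly in `≺_ω`-order, then `BBWT(T)` is obtained by
concatenating, for each entry `(x, c)` of `L` in order, `τ_x` copies of the last
character of `c`. -/
theorem bbwt_eq_of_sorted_conjugates [Inhabited α]
    (t : ℕ) (ht : 0 < t) (Ts : Fin t → List α) (τ : Fin t → ℕ)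
    (hτ : ∀ x, 1 ≤ τ x)
    (hLyn : ∀ x, IsLyndon (Ts x))
    (hdec : ∀ x y : Fin t, x < y → List.Lex (· < ·) (Ts y) (Ts x))
    (T : List α)
    (hT : T = (List.ofFn (fun x => (List.replicate (τ x) (Ts x)).flatten)).flatten)
    (L : List (Fin t × List α))
    (hperm : L.Perm ((List.ofFn (fun x => (List.range (Ts x).length).map
        (fun i => (x, (Ts x).drop i ++ (Ts x).take i)))).flatten))
    (hsorted : L.Chain' (fun a b => OmegaLt a.2 b.2)) :
    BBWT T = L.flatMap (fun p => List.replicate (τ p.1) (p.2.getLastD default)) :=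
  bbwt_eq_of_sorted_conjugates_general t Ts τ hLyn hdec T hT L hperm hsorted
end

section
/- Let R be a nonempty string with Lyndon factorization R = T_1 T_2 ··· T_t, and let p be the starting position of a factor T_x with |T_x| ≥ 2. Then the suffix R[p..|R|] is lexicographically strictly smaller than the suffix R[p+1..|R|] (i.e., position p has type S). -/
/-!
A Lyndon factor `w` with `|w| ≥ 2` is smaller than its proper suffix `w.tail`. Since `w.tail`
is the shorter word, this comparison is decided at a mismatched letter rather than by `w.tail`
being a prefix of `w`, so it survives appending the remaining factors to both sides.
-/

open List

variable {α : Type*} [LinearOrder α]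

theorem List.Lex.append_of_length_lt {β : Type*} {r : β → β → Prop} {u v : List β}
    (h : Lex r u v) (hlen : v.length < u.length) (s t : List β) :
    Lex r (u ++ s) (v ++ t) := by
  induction h with
  | nil => simp at hlen
  | cons _ ih => exact .cons (ih (by simpa using hlen))
  | rel h => exact .rel h

theorem IsLyndon.lex_tail {w : List α} (hw : IsLyndon w)
    (hlen : 2 ≤ w.length) : Lex (· < ·) w w.tail := by
  have htail_len : w.tail.length = w.length - 1 := length_tail
  refine hw.2 w.tail ?_ ?_ (tail_suffix w)
  · intro h
    simp only [h, length_nil] at htail_len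
    omega
  · intro h
    rw [h] at htail_len
    omega

theorem factor_start_is_S_type_general
    (Ts : List (List α))
    (hLyn : ∀ w ∈ Ts, IsLyndon w)
    (x : ℕ) (hx : x < Ts.length) (hlen : 2 ≤ (Ts[x]'hx).length)
    (p : ℕ) (hp : p = ((Ts.take x).map List.length).sum) :
    List.Lex (· < ·) (Ts.flatten.drop p) (Ts.flatten.drop (p + 1)) := by
  have hstart : Ts.flatten.drop p = Ts[x] ++ (Ts.drop (x + 1)).flatten := by
    rw [hp, map_take, drop_sum_flatten, drop_eq_getElem_cons hx, flatten_cons]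
  have hnext : Ts.flatten.drop (p + 1) = Ts[x].tail ++ (Ts.drop (x + 1)).flatten := by
    rw [← drop_drop, hstart, drop_append_of_le_length (by omega), drop_one]
  rw [hstart, hnext]
  refine ((hLyn _ (getElem_mem hx)).lex_tail hlen).append_of_length_lt ?_ _ _
  rw [length_tail]
  omega

/-- Let `R = T₁T₂⋯T_t` be the Lyndon factorization of a nonempty string `R`
(each `T_x` a Lyndon word, consecutive factors non-increasing).  If `T_x` is a factor
with `|T_x| ≥ 2` and `p` is its (0-based) starting position in `R`, then the suffix of
`R` starting at `p` is lexicographically strictly smaller than the suffix starting at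
`p + 1`; i.e. position `p` has type `S`. -/
theorem factor_start_is_S_type
    (Ts : List (List α)) (hne : Ts ≠ [])
    (hLyn : ∀ w ∈ Ts, IsLyndon w)
    (hchain : Ts.Chain' (fun a b => ¬ List.Lex (· < ·) a b))
    (x : ℕ) (hx : x < Ts.length) (hlen : 2 ≤ (Ts[x]'hx).length)
    (p : ℕ) (hp : p = ((Ts.take x).map List.length).sum) :
    List.Lex (· < ·) (Ts.flatten.drop p) (Ts.flatten.drop (p + 1)) :=
  factor_start_is_S_type_general Ts hLyn x hx hlen p hp
end

section
/- Let R be a nonempty string with Lyndon factorization R = T_1 T_2 ··· T_t, and for x < t let q be the position of the last character of T_x. Then the suffix R[q..|R|] is lexicographically strictly greater than the suffix R[q+1..|R|] (i.e., the last position of every non-final Lyndon factor has type L). -/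
/-!
Let `c` be the last letter of `T_x`. Comparing the Lyndon word `T_x` with its suffix `[c]`
gives `T_x ≤ [c]`, and every later factor is `≤ T_x`, so the suffix `S` following position `q`
is a concatenation of nonempty words that are all `≤ [c]`. Such a word starts either with a
letter `< c`, which decides `S < c :: S` at once, or is `[c]` itself, which only shifts the
comparison to the next factor; hence `S < c :: S`, and `c :: S` is the suffix starting at `q`.
-/

open List

variable {α : Type*} [LinearOrder α]

theorem IsLyndon.append_singleton_le_singleton {u : List α} {c : α}
    (hw : IsLyndon (u ++ [c])) : u ++ [c] ≤ [c] := by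
  by_cases h : [c] = u ++ [c]
  · exact h.ge
  · exact le_of_lt (hw.2 _ (cons_ne_nil _ _) h ⟨u, rfl⟩)

namespace List

theorem cons_le_singleton_iff {a c : α} {u : List α} :
    a :: u ≤ [c] ↔ a < c ∨ a = c ∧ u = [] := by
  simp [le_iff_lt_or_eq, cons_lt_cons_iff]

theorem flatten_le_cons_flatten {c : α} :
    ∀ {Us : List (List α)}, (∀ u ∈ Us, u ≠ [] ∧ u ≤ [c]) → Us.flatten ≤ c :: Us.flatten
  | [], _ => le_of_lt (nil_lt_cons _ _)
  | [] :: _, h => absurd rfl (h [] mem_cons_self).1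
  | (a :: u) :: Us, h => by
    rw [flatten_cons, cons_append]
    rcases cons_le_singleton_iff.mp (h _ mem_cons_self).2 with hac | ⟨rfl, rfl⟩
    · exact le_of_lt (cons_lt_cons_iff.mpr (Or.inl hac))
    · exact cons_le_cons a (flatten_le_cons_flatten fun u hu => h u (mem_cons_of_mem _ hu))

theorem flatten_lt_cons_flatten {c : α} {Us : List (List α)}
    (h : ∀ u ∈ Us, u ≠ [] ∧ u ≤ [c]) : Us.flatten < c :: Us.flatten :=
  (flatten_le_cons_flatten h).lt_of_ne (cons_ne_self c _).symm

end List

/-- Let `R = T₁T₂⋯T_t` be the Lyndon factorization of a nonempty string `R`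
(each `T_x` a Lyndon word, consecutive factors non-increasing).  If `x < t` and `q` is
the (0-based) position of the last character of the non-final factor `T_x` in `R`
(so `q + 1 = |T₁| + ⋯ + |T_x|`), then the suffix of `R` starting at `q` is
lexicographically strictly greater than the suffix starting at `q + 1`; i.e. position `q`
has type `L`. -/
theorem factor_end_is_L_type
    (Ts : List (List α))
    (hLyn : ∀ w ∈ Ts, IsLyndon w)
    (hchain : Ts.Chain' (fun a b => ¬ List.Lex (· < ·) a b))
    (x : ℕ) (hx : x + 1 < Ts.length)
    (q : ℕ) (hq : q + 1 = ((Ts.take (x + 1)).map List.length).sum) :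
    List.Lex (· < ·) (Ts.flatten.drop (q + 1)) (Ts.flatten.drop q) := by
  have hsorted : Ts.Pairwise (· ≥ ·) :=
    isChain_iff_pairwise.mp (hchain.imp fun _ _ => le_of_not_gt)
  obtain ⟨A, T, B, rfl, rfl⟩ : ∃ A T B, Ts = A ++ T :: B ∧ A.length = x :=
    ⟨Ts.take x, Ts[x], Ts.drop (x + 1), by simp, by simp; omega⟩
  have hT := hLyn T (by simp)
  obtain ⟨w, c, rfl⟩ : ∃ w c, T = w ++ [c] := ⟨_, _, (dropLast_append_getLast hT.1).symm⟩
  have hsplit : (A ++ (w ++ [c]) :: B).flatten = (A.flatten ++ w) ++ c :: B.flatten := by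
    simp
  have hlen : (A.flatten ++ w).length = q := by
    rw [take_length_add_append] at hq
    simp only [take_succ_cons, take_zero, map_append, map_singleton, sum_append, sum_singleton,
      length_append, length_singleton, length_flatten] at hq ⊢
    omega
  have hdrop : (A.flatten ++ w ++ c :: B.flatten).drop (q + 1) = B.flatten := by
    rw [append_cons, drop_left' (by rw [length_append, hlen, length_singleton])]
  rw [hsplit, drop_left' hlen, hdrop]
  refine flatten_lt_cons_flatten fun u hu => ⟨(hLyn u (by simp [hu])).1, ?_⟩
  exact (rel_of_pairwise_cons (pairwise_append.mp hsorted).2.1 hu).trans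
    hT.append_singleton_le_singleton
end

section
/- Let T be a nonempty string with Lyndon factorization T = T_1 T_2 ··· T_t, and for each x let p_x be the starting position of T_x in T. Then the suffixes of T starting at the beginnings of the Lyndon factors are strictly lexicographically decreasing: T[p_x..|T|] ≻_lex T[p_{x+1}..|T|] for every x with 1 ≤ x < t. -/
/-!
Let `w` be a factor, `u` the next one and `S'` the rest, so that the two suffixes are
`S = u S'` and `w S`, and `S' < S` by induction along the factorization. If `u = w` we are done.
Otherwise `u < w`, and since `w` is Lyndon this upgrades to `u w < w`. Finally, `u v < v` and
`S' < u S'` together force `u S' < v Y` for every `Y`: either `u` already loses to `v` at a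
mismatch, or `v = u v'` with `u v' < v'` and we recurse on `v'`. Taking `v = w` and `Y = S` gives
`S < w S`.
-/

open List

variable {α : Type*} [LinearOrder α]

namespace List

theorem lt_of_append_lt_append_left {α : Type*} [LT α] [Std.Irrefl (· < · : α → α → Prop)]
    {u A B : List α} (h : u ++ A < u ++ B) : A < B := by
  induction u with
  | nil => exact h
  | cons a u ih => exact ih (cons_lt_cons_self.mp h)

theorem append_lt_append_of_append_lt_of_not_prefix {α : Type*} [LT α] {u v X : List α}
    (h : u ++ X < v) (hp : ¬ u <+: v) (Y Z : List α) : u ++ Y < v ++ Z := by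
  induction u generalizing v with
  | nil => exact absurd nil_prefix hp
  | cons a u ih =>
    cases v with
    | nil => exact absurd h (not_lt_nil _)
    | cons b v =>
      rcases cons_lt_cons_iff.mp h with hab | ⟨rfl, htail⟩
      · exact Lex.rel hab
      · exact Lex.cons (ih htail fun hp' => hp ((prefix_cons_inj a).mpr hp'))

theorem append_lt_append_of_append_lt_of_lt_append {u v S : List α} (huv : u ++ v < v)
    (hS : S < u ++ S) (Y : List α) : u ++ S < v ++ Y := by
  by_cases hp : u <+: v
  · obtain ⟨v', rfl⟩ := hp
    have hu : u ≠ [] := by rintro rfl; exact lt_irrefl _ huv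
    have : v'.length < (u ++ v').length := by simp [length_pos_iff.mpr hu]
    have hrec := append_lt_append_of_append_lt_of_lt_append (lt_of_append_lt_append_left huv) hS Y
    rw [append_assoc]
    exact append_left_lt (hS.trans hrec)
  · exact append_lt_append_of_append_lt_of_not_prefix huv hp S Y
termination_by v.length

end List

theorem IsLyndon.append_lt_of_lt {w u : List α} (hw : IsLyndon w) (hu : u ≠ []) (h : u < w) :
    u ++ w < w := by
  by_cases hp : u <+: w
  · obtain ⟨v, rfl⟩ := hp
    have hv : v ≠ [] := by rintro rfl; simp at h
    have hvw : v ≠ u ++ v := mt self_eq_append_left.mp hu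
    exact append_left_lt (hw.2 v hv hvw (suffix_append u v))
  · simpa using append_lt_append_of_append_lt_of_not_prefix (X := []) (by simpa using h) hp w []

theorem IsLyndon.append_lt_append_append {w u S : List α} (hw : IsLyndon w) (huw : ¬ w < u)
    (hS : S < u ++ S) : u ++ S < w ++ (u ++ S) := by
  have hu : u ≠ [] := by rintro rfl; exact lt_irrefl _ hS
  rcases (not_lt.mp huw).lt_or_eq with h | rfl
  · exact append_lt_append_of_append_lt_of_lt_append (hw.append_lt_of_lt hu h) hS _
  · exact append_left_lt hS

theorem flatten_tail_lt_flatten {L : List (List α)} (hL : ∀ w ∈ L, IsLyndon w)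
    (hchain : L.IsChain fun a b => ¬ a < b) (hne : L ≠ []) : L.tail.flatten < L.flatten := by
  induction L with
  | nil => exact absurd rfl hne
  | cons w r ih =>
    have hw : IsLyndon w := hL w mem_cons_self
    cases r with
    | nil =>
      obtain ⟨a, l, rfl⟩ := exists_cons_of_ne_nil hw.1
      exact nil_lt_cons a _
    | cons u r =>
      rw [isChain_cons_cons] at hchain
      have hS := ih (fun v hv => hL v (mem_cons_of_mem w hv)) hchain.2 (cons_ne_nil u r)
      exact hw.append_lt_append_append hchain.1 hS

/-- Let `T = T₁T₂⋯T_t` be the Lyndon factorization of a nonempty string `T`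
(each `T_x` a Lyndon word, consecutive factors non-increasing).  Then the suffixes of
`T` starting at the beginnings of the Lyndon factors are strictly lexicographically
decreasing: for `x + 1 < t` (0-based), the suffix starting at the beginning of
`T_{x+1}` is strictly smaller than the suffix starting at the beginning of `T_x`. -/
theorem suffixes_at_factor_starts_strictly_decreasing
    (Ts : List (List α))
    (hLyn : ∀ w ∈ Ts, IsLyndon w)
    (hchain : Ts.Chain' (fun a b => ¬ List.Lex (· < ·) a b))
    (x : ℕ) (hx : x + 1 < Ts.length) :
    List.Lex (· < ·)
      (Ts.flatten.drop (((Ts.take (x + 1)).map List.length).sum))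
      (Ts.flatten.drop (((Ts.take x).map List.length).sum)) := by
  have hne : Ts.drop x ≠ [] := by simp only [ne_eq, drop_eq_nil_iff]; omega
  rw [map_take, map_take, drop_sum_flatten, drop_sum_flatten, ← tail_drop]
  exact flatten_tail_lt_flatten (fun w hw => hLyn w (mem_of_mem_drop hw)) (hchain.drop x) hne
end

section
/- If w is a Lyndon word and u is a nonempty proper suffix of w, then for all (possibly empty) strings z and z', w·z ≺_lex u·z'. In particular, every suffix of a string R starting strictly inside a Lyndon factor of its Lyndon factorization is lexicographically greater than the suffix of R starting at the beginning of that factor. -/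
/-! A Lyndon word `w` is smaller than its proper suffix `u` but longer, so it is not a prefix of
`u`: the comparison `w ≺ u` is decided at a position inside both words, and survives appending
arbitrary tails. A suffix of the factorization starting inside a factor `T_x` is such a `u`
followed by the remaining factors. -/

open List

variable {α : Type*} [LinearOrder α]

theorem List.Lex.append_append_of_not_prefix {β : Type*} {r : β → β → Prop} {w u : List β}
    (h : Lex r w u) (hp : ¬ w <+: u) (z z' : List β) : Lex r (w ++ z) (u ++ z') := by
  induction h with
  | nil => exact absurd nil_prefix hp
  | cons _ ih => exact .cons (ih fun h' => hp (cons_prefix_cons.2 ⟨rfl, h'⟩))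
  | rel h => exact .rel h

theorem IsLyndon.append_lex_append {w u : List α} (hw : IsLyndon w) (hu : u ≠ [])
    (huw : u ≠ w) (hsuf : u <:+ w) (z z' : List α) : Lex (· < ·) (w ++ z) (u ++ z') :=
  (hw.2 u hu huw hsuf).append_append_of_not_prefix
    (fun hp => huw (hp.eq_of_length (hp.length_le.antisymm hsuf.length_le)).symm) z z'

theorem List.drop_sum_take_map_length_add {β : Type*} {Ts : List (List β)} {x : ℕ}
    (hx : x < Ts.length) {j : ℕ} (hj : j ≤ Ts[x].length) :
    Ts.flatten.drop (((Ts.take x).map length).sum + j) =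
      Ts[x].drop j ++ (Ts.drop (x + 1)).flatten := by
  rw [← drop_drop, map_take, drop_sum_flatten, drop_eq_getElem_cons hx, flatten_cons,
    drop_append_of_le_length hj]

/-- If `w` is a Lyndon word and `u` a nonempty proper suffix of `w`, then `w·z ≺ u·z'`
for all strings `z, z'`.  In particular, in a Lyndon factorization `R = T₁⋯T_t`
(each factor Lyndon, consecutive factors non-increasing), every suffix of `R` starting
strictly inside a factor `T_x` is lexicographically greater than the suffix of `R`
starting at the beginning of `T_x`. -/
theorem lyndon_appended_lt_suffix_appended {α : Type*} [LinearOrder α] :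
    (∀ w u : List α, IsLyndon w → u ≠ [] → u ≠ w → u <:+ w →
      ∀ z z' : List α, List.Lex (· < ·) (w ++ z) (u ++ z'))
    ∧ (∀ Ts : List (List α), (∀ w ∈ Ts, IsLyndon w) →
        Ts.Chain' (fun a b => ¬ List.Lex (· < ·) a b) →
        ∀ x, x < Ts.length → ∀ i : ℕ,
          ((Ts.take x).map List.length).sum < i →
          i < ((Ts.take (x + 1)).map List.length).sum →
          List.Lex (· < ·)
            (Ts.flatten.drop (((Ts.take x).map List.length).sum))
            (Ts.flatten.drop i)) := by
  refine ⟨fun w u hw hu huw hsuf => hw.append_lex_append hu huw hsuf, ?_⟩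
  intro Ts hTs _ x hx i hstart hend
  set s := ((Ts.take x).map List.length).sum
  have hend' : i < s + Ts[x].length := by
    rwa [map_take, sum_take_succ _ _ (by simpa using hx), getElem_map, ← map_take] at hend
  obtain ⟨j, rfl⟩ : ∃ j, i = s + j := ⟨i - s, by omega⟩
  have hfactor : Ts.flatten.drop s = Ts[x] ++ (Ts.drop (x + 1)).flatten := by
    simpa only [add_zero, drop_zero] using drop_sum_take_map_length_add hx (Nat.zero_le _)
  rw [hfactor, drop_sum_take_map_length_add hx (by omega)]
  refine (hTs _ (getElem_mem hx)).append_lex_append ?_ ?_ (drop_suffix j _) _ _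
  · simpa using (show j < Ts[x].length by omega)
  · exact ne_of_apply_ne length (by rw [length_drop]; omega)
end

section
/- Let R be a nonempty string with Lyndon factorization R = T_1 T_2 ··· T_t where T_1 ≻_lex ··· ≻_lex T_t are pairwise distinct, let T_x be a factor with |T_x| ≥ 2, and let p and q be the first and last positions of T_x in R. For every position i with p ≤ i < q, writing c_i for the conjugate of T_x whose first character is at position i of R, it holds that R[i..|R|] ≺_lex R[i+1..|R|] if and only if (c_i)^ω ≺_lex (c_{i+1})^ω. That is, the L/S type of every non-final position inside a Lyndon factor is the same whether computed from the suffixes of R or from the infinite powers of the corresponding conjugates. -/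
/-!
Write the factor as `T = u a v` with `a` the letter at position `i`, and let `S` be the product of
the later factors. The two comparisons are `a v S` against `v S` and `a v T^ω` against `v T^ω`;
both are decided by the first letter after the common prefix of `a`'s, compared with `a`. If `v` is
not a power of `a`, that letter lies in `v` and both comparisons agree. Otherwise the constant word
`a v` is a proper suffix of the Lyndon word `T`, so `T ≤ a^ω`; the later factors are smaller than `T`,
so `S ≤ a^ω`, and `T^ω ≤ a^ω` as well, which makes both comparisons false.
-/

open List

variable {α : Type*} [LinearOrder α]

/-- `LexLeConst a l` says `l ≤ a^ω` in the lexicographic order; `InfLexLeConst` is its analogue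
for infinite words. -/
def LexLeConst (a : α) : List α → Prop
  | [] => True
  | b :: l => b < a ∨ b = a ∧ LexLeConst a l

def InfLexLeConst (a : α) (V : ℕ → α) : Prop :=
  ∀ n, (∀ m < n, V m = a) → V n ≤ a

section LexLeConst

variable {a : α}

theorem lexLeConst_of_forall_eq {l : List α} (h : ∀ b ∈ l, b = a) : LexLeConst a l := by
  induction l with
  | nil => trivial
  | cons b l ih => exact .inr ⟨h b mem_cons_self, ih fun c hc => h c (mem_cons_of_mem b hc)⟩

theorem lexLeConst_append_iff {l₁ l₂ : List α} :
    LexLeConst a (l₁ ++ l₂) ↔ LexLeConst a l₁ ∧ ((∀ b ∈ l₁, b = a) → LexLeConst a l₂) := by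
  induction l₁ with
  | nil => simp [LexLeConst]
  | cons b l ih =>
    simp only [cons_append, LexLeConst, ih, mem_cons, forall_eq_or_imp]
    rcases lt_trichotomy b a with h | rfl | h
    · simp [h, h.ne]
    · simp
    · simp [h.not_gt, h.ne']

theorem lexLeConst_flatten {L : List (List α)} (h : ∀ l ∈ L, LexLeConst a l) :
    LexLeConst a L.flatten := by
  induction L with
  | nil => trivial
  | cons l L ih =>
    rw [flatten_cons, lexLeConst_append_iff]
    exact ⟨h l mem_cons_self, fun _ => ih fun l' hl' => h l' (mem_cons_of_mem l hl')⟩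

theorem LexLeConst.of_lex {l₁ l₂ : List α} (h : Lex (· < ·) l₁ l₂) (h₂ : LexLeConst a l₂) :
    LexLeConst a l₁ := by
  induction h with
  | nil => trivial
  | rel hlt => exact .inl (h₂.elim (lt_trans hlt) fun h => h.1 ▸ hlt)
  | cons _ ih => exact h₂.imp id fun h => ⟨h.1, ih h.2⟩

theorem lex_cons_self_iff {l : List α} : Lex (· < ·) (a :: l) l ↔ ¬ LexLeConst a l := by
  induction l with
  | nil => simp [LexLeConst]
  | cons b l ih =>
    rw [cons_lex_cons_iff, LexLeConst]
    rcases lt_trichotomy b a with h | rfl | h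
    · simp [h.not_gt, h.ne', h]
    · simp [ih]
    · simp [h, h.not_gt, h.ne']

theorem infLexLeConst_cons_iff {b : α} {V : Stream' α} :
    InfLexLeConst a (Stream'.cons b V) ↔ b < a ∨ b = a ∧ InfLexLeConst a V := by
  constructor
  · intro h
    rcases (h 0 fun _ h => absurd h (Nat.not_lt_zero _)).lt_or_eq with hb | hb
    · exact .inl hb
    · refine .inr ⟨hb, fun n hn => h (n + 1) fun m hm => ?_⟩
      cases m with
      | zero => exact hb
      | succ m => exact hn m (by omega)
  · rintro (hb | ⟨rfl, hV⟩) (_ | n) hn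
    · exact hb.le
    · exact absurd (hn 0 n.succ_pos) hb.ne
    · exact le_rfl
    · exact hV n fun m hm => hn (m + 1) (by omega)

theorem infLexLeConst_append_iff {l : List α} {V : Stream' α} :
    InfLexLeConst a (l ++ₛ V) ↔ LexLeConst a l ∧ ((∀ b ∈ l, b = a) → InfLexLeConst a V) := by
  induction l with
  | nil => simp only [LexLeConst, not_mem_nil, true_and]; exact ⟨fun h _ => h, fun h => h nofun⟩
  | cons b l ih =>
    refine infLexLeConst_cons_iff.trans ?_
    simp only [ih, LexLeConst, mem_cons, forall_eq_or_imp]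
    rcases lt_trichotomy b a with h | rfl | h
    · simp [h, h.ne]
    · simp
    · simp [h.not_gt, h.ne']

theorem infLexLt_cons_self_iff {V : Stream' α} :
    InfLexLt (Stream'.cons a V) V ↔ ¬ InfLexLeConst a V := by
  have hcons : ∀ n, (∀ m < n, V m = a) → Stream'.cons a V n = a := by
    rintro (_ | n) h
    exacts [rfl, h n n.lt_add_one]
  have hprefix : ∀ n, (∀ m < n, Stream'.cons a V m = V m) → ∀ m < n, V m = a := by
    intro n
    induction n with
    | zero => simp
    | succ n ih =>
      intro h m hm
      have hn := ih fun k hk => h k (by omega)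
      rcases (Nat.lt_succ_iff_lt_or_eq.mp hm) with hm | rfl
      · exact hn m hm
      · exact (h m m.lt_add_one).symm.trans (hcons m hn)
  simp only [InfLexLt, InfLexLeConst, not_forall, not_le, exists_prop]
  constructor
  · rintro ⟨n, hag, hlt⟩
    exact ⟨n, hprefix n hag, hcons n (hprefix n hag) ▸ hlt⟩
  · rintro ⟨n, hpre, hlt⟩
    refine ⟨n, fun m hm => ?_, (hcons n hpre).symm ▸ hlt⟩
    rw [hcons m fun k hk => hpre k (hk.trans hm), hpre m hm]

theorem lex_cons_append_self_iff_infLexLt {v S : List α} {W : Stream' α}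
    (h : (∀ b ∈ v, b = a) → LexLeConst a S ∧ InfLexLeConst a W) :
    Lex (· < ·) (a :: (v ++ S)) (v ++ S) ↔ InfLexLt (Stream'.cons a (v ++ₛ W)) (v ++ₛ W) := by
  refine lex_cons_self_iff.trans (Iff.trans ?_ infLexLt_cons_self_iff.symm)
  rw [lexLeConst_append_iff, infLexLeConst_append_iff]
  exact not_congr (and_congr_right fun _ => ⟨fun _ hv => (h hv).2, fun _ hv => (h hv).1⟩)

end LexLeConst

section OmegaWord

variable {β : Type*} [Inhabited β]

theorem omegaWord_eq_append (w : List β) : omegaWord w = w ++ₛ omegaWord w := by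
  funext n
  change _ = Stream'.get _ n
  rcases lt_or_ge n w.length with hn | hn
  · rw [Stream'.get_append_left n w (omegaWord w) hn, omegaWord, Nat.mod_eq_of_lt hn,
      getD_eq_getElem _ _ hn]
  · obtain ⟨k, rfl⟩ := Nat.exists_eq_add_of_le hn
    rw [Stream'.get_append_right k w (omegaWord w)]
    simp [omegaWord, Stream'.get]

theorem omegaWord_rotate_s9 (w : List β) (j : ℕ) :
    omegaWord (w.rotate j) = Stream'.drop j (omegaWord w) := by
  funext n
  rcases eq_or_ne w [] with rfl | hw
  · simp [omegaWord, Stream'.drop, Stream'.get]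
  have hpos : 0 < w.length := length_pos_iff.mpr hw
  simp only [omegaWord, Stream'.drop, Stream'.get, length_rotate]
  rw [getD_eq_getElem _ _ (by simpa using Nat.mod_lt n hpos), getElem_rotate,
    getD_eq_getElem _ _ (Nat.mod_lt _ hpos)]
  simp [Nat.add_mod]

theorem omegaWord_drop_append_take {w : List β} {j : ℕ} (hj : j ≤ w.length) :
    omegaWord (w.drop j ++ w.take j) = w.drop j ++ₛ omegaWord w := by
  have h := Stream'.drop_append_stream (w.take j) (w.drop j ++ₛ omegaWord w)
  rw [← Stream'.append_append_stream (w.take j) (w.drop j) (omegaWord w), take_append_drop,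
    ← omegaWord_eq_append, length_take_of_le hj] at h
  rw [← rotate_eq_drop_append_take hj, omegaWord_rotate_s9, h]

theorem infLexLeConst_omegaWord [Inhabited α] {a : α} {w : List α} (h : LexLeConst a w)
    (hw : ¬ ∀ b ∈ w, b = a) : InfLexLeConst a (omegaWord w) := by
  rw [omegaWord_eq_append]
  exact infLexLeConst_append_iff.mpr ⟨h, fun h' => absurd h' hw⟩

end OmegaWord

namespace IsLyndon

variable {w : List α}

theorem not_forall_eq (hw : IsLyndon w) (hlen : 2 ≤ w.length) (a : α) : ¬ ∀ b ∈ w, b = a := by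
  intro hall
  obtain ⟨b, t, rfl⟩ := exists_cons_of_ne_nil hw.1
  have ht : t ≠ [] := by rintro rfl; simp at hlen
  have hlex := hw.2 t ht (by simp) (suffix_cons b t)
  rw [hall b mem_cons_self, lex_cons_self_iff] at hlex
  exact hlex (lexLeConst_of_forall_eq fun c hc => hall c (mem_cons_of_mem b hc))

theorem lexLeConst_of_suffix (hw : IsLyndon w) (hlen : 2 ≤ w.length) {a : α} {u : List α}
    (hu : u <:+ w) (hu₀ : u ≠ []) (hua : ∀ b ∈ u, b = a) : LexLeConst a w := by
  have hne : u ≠ w := by rintro rfl; exact hw.not_forall_eq hlen a hua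
  exact (lexLeConst_of_forall_eq hua).of_lex (hw.2 u hu₀ hne hu)

end IsLyndon

theorem drop_flatten_sum_add {β : Type*} {L : List (List β)} {x : ℕ} (hx : x < L.length)
    {j : ℕ} (hj : j ≤ L[x].length) :
    L.flatten.drop (((L.take x).map length).sum + j) = L[x].drop j ++ (L.drop (x + 1)).flatten := by
  have hflat : L.flatten = (L.take x).flatten ++ (L[x] ++ (L.drop (x + 1)).flatten) := by
    rw [← flatten_cons, ← drop_eq_getElem_cons hx, ← flatten_append, take_append_drop]
  rw [hflat, ← length_flatten, drop_length_add_append, drop_append_of_le_length hj]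

theorem type_of_inner_position_eq_general [Inhabited α]
    (Ts : List (List α))
    (hLyn : ∀ w ∈ Ts, IsLyndon w)
    (hdec : Ts.Pairwise (fun a b => List.Lex (· < ·) b a))
    (x : ℕ) (hx : x < Ts.length)
    (p : ℕ) (hp : p = ((Ts.take x).map List.length).sum)
    (i : ℕ) (hip : p ≤ i) (hiq : i + 1 < p + (Ts[x]'hx).length) :
    (List.Lex (· < ·) (Ts.flatten.drop i) (Ts.flatten.drop (i + 1)) ↔
      InfLexLt
        (omegaWord ((Ts[x]'hx).drop (i - p) ++ (Ts[x]'hx).take (i - p)))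
        (omegaWord ((Ts[x]'hx).drop (i + 1 - p) ++ (Ts[x]'hx).take (i + 1 - p)))) := by
  obtain ⟨j, rfl⟩ := Nat.exists_eq_add_of_le hip
  subst hp
  set T := Ts[x]
  have hj : j < T.length := by omega
  have hlen : 2 ≤ T.length := by omega
  have hLynT : IsLyndon T := hLyn T (getElem_mem hx)
  have hlater : ∀ F ∈ Ts.drop (x + 1), Lex (· < ·) F T := by
    have := hdec.sublist (drop_sublist x Ts)
    rw [drop_eq_getElem_cons hx, pairwise_cons] at this
    exact this.1
  rw [Nat.add_sub_cancel_left, add_assoc, Nat.add_sub_cancel_left,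
    drop_flatten_sum_add hx hj.le, drop_flatten_sum_add hx hj,
    omegaWord_drop_append_take hj.le, omegaWord_drop_append_take hj,
    drop_eq_getElem_cons hj, cons_append]
  apply lex_cons_append_self_iff_infLexLt
  intro hconst
  have hTa : LexLeConst T[j] T :=
    hLynT.lexLeConst_of_suffix hlen (drop_suffix j T)
      (by rw [drop_eq_getElem_cons hj]; exact cons_ne_nil _ _)
      (by rw [drop_eq_getElem_cons hj]; exact forall_mem_cons.2 ⟨rfl, hconst⟩)
  exact ⟨lexLeConst_flatten fun F hF => hTa.of_lex (hlater F hF),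
    infLexLeConst_omegaWord hTa (hLynT.not_forall_eq hlen _)⟩

/-- Let `R = T₁⋯T_t` be the Lyndon factorization of `R` with `T₁ ≻ ⋯ ≻ T_t` pairwise
distinct, and let `T_x` be a factor of length at least `2` starting at (0-based)
position `p` of `R`.  For every position `i` inside `T_x` other than its last position,
the suffix of `R` at `i` is smaller than the suffix at `i + 1` if and only if the
ω-power of the conjugate of `T_x` beginning at position `i` is smaller (as an infinite
word) than the ω-power of the conjugate beginning at position `i + 1`: the L/S type of
every non-final position inside a Lyndon factor is the same, whether computed from the
suffixes or from the conjugates. -/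
theorem type_of_inner_position_eq [Inhabited α]
    (Ts : List (List α))
    (hLyn : ∀ w ∈ Ts, IsLyndon w)
    (hdec : Ts.Pairwise (fun a b => List.Lex (· < ·) b a))
    (x : ℕ) (hx : x < Ts.length) (hlen : 2 ≤ (Ts[x]'hx).length)
    (p : ℕ) (hp : p = ((Ts.take x).map List.length).sum)
    (i : ℕ) (hip : p ≤ i) (hiq : i + 1 < p + (Ts[x]'hx).length) :
    (List.Lex (· < ·) (Ts.flatten.drop i) (Ts.flatten.drop (i + 1)) ↔
      InfLexLt
        (omegaWord ((Ts[x]'hx).drop (i - p) ++ (Ts[x]'hx).take (i - p)))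
        (omegaWord ((Ts[x]'hx).drop (i + 1 - p) ++ (Ts[x]'hx).take (i + 1 - p)))) :=
  type_of_inner_position_eq_general Ts hLyn hdec x hx p hp i hip hiq
end

section
/- If w is a Lyndon word and 1 ≤ i ≤ |w| − 1, then w^ω ≺_lex (conj_i(w))^ω; that is, a Lyndon word is strictly smaller, in the ω-order, than every other conjugate of itself. -/
/-!
The Lyndon property gives `w < w.drop i`. As `w.drop i` is shorter than `w`, this comparison is
decided at a position `ℓ < |w| - i`, where `w^ω` reads `w[ℓ]` and `(conj_i w)^ω` reads
`(w.drop i)[ℓ]`; everything before agrees.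
-/

open List

variable {α : Type*} [LinearOrder α]

theorem IsLyndon.lt_drop {w : List α} (hw : IsLyndon w) {i : ℕ} (hi₀ : 0 < i)
    (hi : i < w.length) : w < w.drop i := by
  refine hw.2 _ ?_ ?_ (drop_suffix i w)
  · simpa using hi
  · intro h
    have := congrArg length h
    simp only [length_drop] at this
    omega

section OmegaWord

variable {β : Type*} [Inhabited β]

theorem omegaWord_of_lt_length {S : List β} {n : ℕ} (h : n < S.length) :
    omegaWord S n = S[n] := by
  rw [omegaWord, Nat.mod_eq_of_lt h, getD_eq_getElem _ _ h]

theorem omegaWord_append_of_lt_length {u v : List β} {n : ℕ} (h : n < u.length) :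
    omegaWord (u ++ v) n = u[n] := by
  rw [omegaWord_of_lt_length (by simp; omega), getElem_append_left h]

end OmegaWord

theorem infLexLt_omegaWord_append [Inhabited α] {w u : List α} (h : w < u)
    (hlen : u.length ≤ w.length) (v : List α) : InfLexLt (omegaWord w) (omegaWord (u ++ v)) := by
  rcases List.lt_iff_exists.mp h with ⟨-, hlt⟩ | ⟨ℓ, hℓw, hℓu, hagree, hℓ⟩
  · omega
  refine ⟨ℓ, fun m hm => ?_, ?_⟩
  · rw [omegaWord_of_lt_length (hm.trans hℓw), omegaWord_append_of_lt_length (hm.trans hℓu)]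
    exact hagree m hm
  · rwa [omegaWord_of_lt_length hℓw, omegaWord_append_of_lt_length hℓu]

/-- A Lyndon word is strictly smaller, in the ω-order, than every other conjugate of
itself: `w^ω ≺ (conj_i(w))^ω` for `1 ≤ i ≤ |w| - 1`. -/
theorem lyndon_omega_lt_conjugates [Inhabited α]
    (w : List α) (hw : IsLyndon w) (i : ℕ) (h1 : 1 ≤ i) (h2 : i ≤ w.length - 1) :
    InfLexLt (omegaWord w) (omegaWord (w.drop i ++ w.take i)) :=
  infLexLt_omegaWord_append (hw.lt_drop h1 (by omega)) (by simp) _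
end
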